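/- For every γ ∈ (0,1), the capacity of the simulated classical channel Ξ, C_Ξ(γ) = H(p_E,(1−p_E)/2,(1−p_E)/2) − H(p_E,p_F,1−p_E−p_F) with p_E = γ/2, p_F = ((1−√(1−γ))/2)², is at most the erasure-channel capacity 1 − γ/2. -/
import Mathlib


/-- Shannon entropy of a probability vector `(a, b, c)`, base 2, with `0 * log 0 = 0`. -/
noncomputable def H3 (a b c : ℝ) : ℝ :=
  -(a * Real.logb 2 a) - (b * Real.logb 2 b) - (c * Real.logb 2 c)

lemma mul_logb_le_mul_logb (x s : ℝ) (hx : 0 ≤ x) (hxs : x ≤ s) :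
    x * Real.logb 2 x ≤ x * Real.logb 2 s := by
  rcases eq_or_lt_of_le hx with h | h
  · simp [← h]
  · exact mul_le_mul_of_nonneg_left (((Real.logb_le_logb one_lt_two h (h.trans_le hxs)).mpr hxs)) hx

theorem capXi_le_erasure_capacity (γ : ℝ) (h0 : 0 < γ) (h1 : γ < 1) :
    let pE : ℝ := γ / 2
    let pF : ℝ := ((1 - Real.sqrt (1 - γ)) / 2) ^ 2
    H3 pE ((1 - pE) / 2) ((1 - pE) / 2) - H3 pE pF (1 - pE - pF) ≤ 1 - γ / 2 := by
  intro pE pF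
  have hpE : pE = γ / 2 := rfl
  have hpE2 : pE < 1 / 2 := by rw [hpE]; linarith
  have h1pE : (0:ℝ) < 1 - pE := by linarith
  -- bounds on pF
  have hs0 : 0 ≤ Real.sqrt (1 - γ) := Real.sqrt_nonneg _
  have hs1 : Real.sqrt (1 - γ) ≤ 1 := Real.sqrt_le_one.mpr (by linarith)
  have hpF0 : 0 ≤ pF := sq_nonneg _
  have hpF4 : pF ≤ 1 / 4 := by
    have h : (1 - Real.sqrt (1 - γ)) / 2 ≤ 1 / 2 := by linarith
    have h0' : 0 ≤ (1 - Real.sqrt (1 - γ)) / 2 := by linarith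
    calc pF ≤ (1/2 : ℝ)^2 := pow_le_pow_left₀ h0' h 2
    _ = 1/4 := by norm_num
  have hpF : pF ≤ 1 - pE := by linarith
  have hq0 : 0 ≤ 1 - pE - pF := by linarith
  have hq : 1 - pE - pF ≤ 1 - pE := by linarith
  -- key entropy comparison
  have key : pF * Real.logb 2 pF + (1 - pE - pF) * Real.logb 2 (1 - pE - pF)
      ≤ (1 - pE) * Real.logb 2 (1 - pE) := by
    have h1 := mul_logb_le_mul_logb pF (1 - pE) hpF0 hpF
    have h2 := mul_logb_le_mul_logb (1 - pE - pF) (1 - pE) hq0 hq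
    nlinarith [h1, h2]
  -- compute the first entropy
  have hlog : Real.logb 2 ((1 - pE) / 2) = Real.logb 2 (1 - pE) - 1 := by
    rw [Real.logb_div (by linarith) (by norm_num), Real.logb_self_eq_one]; norm_num
  have hH1 : H3 pE ((1 - pE) / 2) ((1 - pE) / 2)
      = -(pE * Real.logb 2 pE) - (1 - pE) * Real.logb 2 (1 - pE) + (1 - pE) := by
    unfold H3
    rw [hlog]
    ring
  have hH2 : H3 pE pF (1 - pE - pF)
      = -(pE * Real.logb 2 pE) - pF * Real.logb 2 pF
        - (1 - pE - pF) * Real.logb 2 (1 - pE - pF) := by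
    unfold H3; ring
  rw [hH1, hH2, ← hpE]
  linarith [key]
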